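/- Let the setting be type A_N or type B_N. For each (i,k) ∈ X there exists exactly one path in P_{i,k} whose set of upper corners C_{p,+} is empty (the lowest path p⁻_{i,k}); moreover it is the unique path in P_{i,k} containing the point (N+1−i, k+N+1) in type A, the unique path containing ι(i, k+4N−2) in type B when i < N, and the unique path containing (2N−1, k+4N−2+ε) in type B when i = N. -/

import Mathlib

namespace Paper

/-- The ambient setting: type `A N` (with `N ≥ 1`) or type `B N ε`
(with `N ≥ 2` and `0 < ε < 1/2`). -/
inductive Setting where
  | A (N : ℕ)
  | B (N : ℕ) (ε : ℝ)

namespace Setting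

/-- The rank `N`. -/
def N : Setting → ℕ
  | A n => n
  | B n _ => n

/-- Validity of the parameters of the setting. -/
def valid : Setting → Prop
  | A n => 1 ≤ n
  | B n ε => 2 ≤ n ∧ 0 < ε ∧ ε < 1 / 2

end Setting

/-- The numbers `r_i` : in type A all equal `1`; in type B, `r_N = 1` and `r_i = 2` for `i < N`. -/
def rr : Setting → ℕ → ℕ
  | .A _, _ => 1
  | .B n _, j => if j = n then 1 else 2

/-- The set `X` in type `A_N`. -/
def XA (n : ℕ) : Set (ℕ × ℤ) :=
  {ik | 1 ≤ ik.1 ∧ ik.1 ≤ n ∧ ((ik.1 : ℤ) - ik.2) % 2 = 1}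

/-- The set `X` in type `B_N`. -/
def XB (n : ℕ) : Set (ℕ × ℤ) :=
  {ik | (ik.1 = n ∧ ik.2 % 2 = 1) ∨ (1 ≤ ik.1 ∧ ik.1 < n ∧ ik.2 % 2 = 0)}

/-- The set `X ⊆ I × ℤ`. -/
def X : Setting → Set (ℕ × ℤ)
  | .A n => XA n
  | .B n _ => XB n

/-- The set `W = {(i,k) : (i, k - r_i) ∈ X}`. -/
def W (S : Setting) : Set (ℕ × ℤ) :=
  {ik | (ik.1, ik.2 - (rr S ik.1 : ℤ)) ∈ X S}

/-- The `r`-th point of a path (a finite list of points of the plane). -/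
def pt (p : List (ℝ × ℝ)) (r : ℕ) : ℝ × ℝ := p.getD r (0, 0)

/-- The set of paths `𝒫_{i,k}` in type `A_N`. -/
def pathsA (n : ℕ) (i : ℕ) (k : ℤ) : Set (List (ℝ × ℝ)) :=
  {p | p.length = n + 2 ∧
    (∀ r, r < n + 2 → (pt p r).1 = (r : ℝ)) ∧
    (pt p 0).2 = (i : ℝ) + (k : ℝ) ∧
    (pt p (n + 1)).2 = (n : ℝ) + 1 - (i : ℝ) + (k : ℝ) ∧
    (∀ r, r ≤ n → (pt p (r + 1)).2 - (pt p r).2 = 1 ∨ (pt p (r + 1)).2 - (pt p r).2 = -1)}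

/-- The set of paths `𝒫_{N,ℓ}` in type `B_N`. -/
def pathsBspin (n : ℕ) (ε : ℝ) (l : ℤ) : Set (List (ℝ × ℝ)) :=
  {p | p.length = n + 1 ∧
    (if l % 4 = 3 then ∀ r, r < n → (pt p r).1 = 2 * (r : ℝ)
     else ∀ r, r < n → (pt p r).1 = 4 * (n : ℝ) - 2 - 2 * (r : ℝ)) ∧
    (pt p n).1 = 2 * (n : ℝ) - 1 ∧
    (pt p 0).2 = (l : ℝ) + 2 * (n : ℝ) - 1 ∧
    (∀ r, r + 2 ≤ n → (pt p (r + 1)).2 - (pt p r).2 = 2 ∨ (pt p (r + 1)).2 - (pt p r).2 = -2) ∧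
    ((pt p n).2 - (pt p (n - 1)).2 = 1 + ε ∨ (pt p n).2 - (pt p (n - 1)).2 = -(1 + ε))}

/-- The set of paths `𝒫_{i,k}` in type `B_N`. -/
def pathsB (n : ℕ) (ε : ℝ) (i : ℕ) (k : ℤ) : Set (List (ℝ × ℝ)) :=
  if i = n then pathsBspin n ε k
  else {p | ∃ a b : List (ℝ × ℝ),
    a ∈ pathsBspin n ε (k - (2 * (n : ℤ) - 2 * (i : ℤ) - 1)) ∧
    b ∈ pathsBspin n ε (k + (2 * (n : ℤ) - 2 * (i : ℤ) - 1)) ∧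
    p = a ++ b.reverse ∧
    (pt a n).1 = (pt b n).1 ∧ 0 < (pt a n).2 - (pt b n).2}

/-- The set of paths `𝒫_{i,k}`. -/
def P : Setting → ℕ → ℤ → Set (List (ℝ × ℝ))
  | .A n => pathsA n
  | .B n ε => pathsB n ε

/-- The map `ι : X → ℤ × ℤ` of type `B_N`. -/
def iotaB (n : ℕ) (ik : ℕ × ℤ) : ℤ × ℤ :=
  if ik.1 = n then (2 * (n : ℤ) - 1, ik.2)
  else if (2 * (n : ℤ) + ik.2 - 2 * (ik.1 : ℤ)) % 4 = 2 then (2 * (ik.1 : ℤ), ik.2)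
  else (4 * (n : ℤ) - 2 - 2 * (ik.1 : ℤ), ik.2)

/-- The corners of a path: `Cp S p true` is the set `C_{p,+}` of upper corners, and
`Cp S p false` is the set `C_{p,-}` of lower corners. -/
def Cp (S : Setting) (p : List (ℝ × ℝ)) (up : Bool) : Set (ℕ × ℤ) :=
  match S with
  | .A n =>
    {jl | 1 ≤ jl.1 ∧ jl.1 ≤ n ∧
      pt p jl.1 = ((jl.1 : ℝ), (jl.2 : ℝ)) ∧
      (pt p (jl.1 - 1)).2 = (jl.2 : ℝ) + (if up then 1 else -1) ∧
      (pt p (jl.1 + 1)).2 = (jl.2 : ℝ) + (if up then 1 else -1)}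
  | .B n ε =>
    {jl | jl ∈ XB n ∧
      ((∃ r : ℕ, 1 ≤ r ∧ r + 1 < p.length ∧
          pt p r = (((iotaB n jl).1 : ℝ), ((iotaB n jl).2 : ℝ)) ∧
          (iotaB n jl).1 ≠ 0 ∧ (iotaB n jl).1 ≠ 2 * (n : ℤ) - 1 ∧
          (iotaB n jl).1 ≠ 4 * (n : ℤ) - 2 ∧
          (if up then (pt p r).2 < (pt p (r - 1)).2 ∧ (pt p r).2 < (pt p (r + 1)).2
           else (pt p (r - 1)).2 < (pt p r).2 ∧ (pt p (r + 1)).2 < (pt p r).2))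
       ∨ (jl.1 = n ∧
          (if up then (2 * (n : ℝ) - 1, (jl.2 : ℝ) - ε) ∈ p ∧ (2 * (n : ℝ) - 1, (jl.2 : ℝ) + ε) ∉ p
           else (2 * (n : ℝ) - 1, (jl.2 : ℝ) + ε) ∈ p ∧ (2 * (n : ℝ) - 1, (jl.2 : ℝ) - ε) ∉ p)))}

/-- `p'` is obtained from `p` by replacing the point `q` by the point `q'`. -/
def Replace1 (p p' : List (ℝ × ℝ)) (q q' : ℝ × ℝ) : Prop :=
  ∃ r : ℕ, r < p.length ∧ pt p r = q ∧ p'.length = p.length ∧ pt p' r = q' ∧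
    ∀ s, s < p.length → s ≠ r → pt p' s = pt p s

/-- `p'` is obtained from `p` by replacing the point `q1` by `q1'` and the point `q2` by `q2'`. -/
def Replace2 (p p' : List (ℝ × ℝ)) (q1 q1' q2 q2' : ℝ × ℝ) : Prop :=
  ∃ r s : ℕ, r < p.length ∧ s < p.length ∧ r ≠ s ∧ pt p r = q1 ∧ pt p s = q2 ∧
    p'.length = p.length ∧ pt p' r = q1' ∧ pt p' s = q2' ∧
    ∀ u, u < p.length → u ≠ r → u ≠ s → pt p' u = pt p u

/-- The path `p` can be lowered at `(j, l)`: `(j, l - r_j) ∈ C_{p,+}` and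
`(j, l + r_j) ∉ C_{p,+}`. -/
def CanLower (S : Setting) (p : List (ℝ × ℝ)) (j : ℕ) (l : ℤ) : Prop :=
  (j, l - (rr S j : ℤ)) ∈ Cp S p true ∧ (j, l + (rr S j : ℤ)) ∉ Cp S p true

/-- `p'` is the result of the lowering move at `(j,l)` applied to the path `p ∈ 𝒫_{i,k}`;
written `p' = p 𝒜_{j,l}⁻¹`. -/
def LoweredTo (S : Setting) (i : ℕ) (k : ℤ) (j : ℕ) (l : ℤ)
    (p p' : List (ℝ × ℝ)) : Prop :=
  p ∈ P S i k ∧ p' ∈ P S i k ∧ CanLower S p j l ∧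
  (match S with
   | .A _ => Replace1 p p' ((j : ℝ), (l : ℝ) - 1) ((j : ℝ), (l : ℝ) + 1)
   | .B n ε =>
     if j = n then
       Replace1 p p' (2 * (n : ℝ) - 1, (l : ℝ) - 1 - ε) (2 * (n : ℝ) - 1, (l : ℝ) + 1 + ε)
     else if j = n - 1 then
       Replace2 p p'
         (((iotaB n (j, l - 2)).1 : ℝ), (l : ℝ) - 2) (((iotaB n (j, l - 2)).1 : ℝ), (l : ℝ) + 2)
         (2 * (n : ℝ) - 1, (l : ℝ) - 1 + ε) (2 * (n : ℝ) - 1, (l : ℝ) + 1 - ε)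
     else
       Replace1 p p'
         (((iotaB n (j, l - 2)).1 : ℝ), (l : ℝ) - 2) (((iotaB n (j, l - 2)).1 : ℝ), (l : ℝ) + 2))

/-- The path `p` can be raised at `(j,l)`: it is of the form `p' 𝒜_{j,l}⁻¹`. -/
def CanRaise (S : Setting) (i : ℕ) (k : ℤ) (p : List (ℝ × ℝ)) (j : ℕ) (l : ℤ) : Prop :=
  ∃ p', LoweredTo S i k j l p' p

/-- The monomial group `ℳ`, realised as exponent functions: the free abelian group on the
symbols `Y_{i,k}`, `(i,k) ∈ X`, is identified with finitely supported functions `(ℕ × ℤ) → ℤ`,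
written additively. -/
def Y (x : ℕ × ℤ) : (ℕ × ℤ) → ℤ := fun z => if z = x then 1 else 0

noncomputable def ind (s : Prop) : ℤ := @ite ℤ s (Classical.propDecidable s) 1 0

/-- The monomial `m(p)` of a path: `∏ Y_{j,l}` over upper corners times `∏ Y_{j,l}⁻¹`
over lower corners. -/
noncomputable def mon (S : Setting) (p : List (ℝ × ℝ)) : (ℕ × ℤ) → ℤ :=
  fun x => ind (x ∈ Cp S p true) - ind (x ∈ Cp S p false)

/-- The monomials `A_{j,l}`, with the conventions `Y_{0,·} = Y_{N+1,·} = 1`. -/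
def Amon (S : Setting) (j : ℕ) (l : ℤ) : (ℕ × ℤ) → ℤ :=
  match S with
  | .A n =>
      Y (j, l + 1) + Y (j, l - 1) - (if j = 1 then 0 else Y (j - 1, l))
        - (if j = n then 0 else Y (j + 1, l))
  | .B n _ =>
      if j = n then Y (n, l + 1) + Y (n, l - 1) - Y (n - 1, l)
      else if j = n - 1 then
        Y (n - 1, l + 2) + Y (n - 1, l - 2) - (if j = 1 then 0 else Y (n - 2, l))
          - Y (n, l + 1) - Y (n, l - 1)
      else
        Y (j, l + 2) + Y (j, l - 2) - (if j = 1 then 0 else Y (j - 1, l)) - Y (j + 1, l)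

/-- A monomial is dominant iff all its exponents are nonnegative. -/
def Dominant (m : (ℕ × ℤ) → ℤ) : Prop := ∀ x, 0 ≤ m x

/-- A monomial is anti-dominant iff all its exponents are nonpositive. -/
def AntiDominant (m : (ℕ × ℤ) → ℤ) : Prop := ∀ x, m x ≤ 0

/-- `(i',k')` is in snake position with respect to `(i,k)`. -/
def SnakePos : Setting → ℕ × ℤ → ℕ × ℤ → Prop
  | .A _, ik, ik' => |(ik'.1 : ℤ) - (ik.1 : ℤ)| + 2 ≤ ik'.2 - ik.2
  | .B n _, ik, ik' =>
      if ik.1 = n ∧ ik'.1 = n then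
        2 ≤ ik'.2 - ik.2 ∧ (ik'.2 - ik.2) % 4 = 2
      else if ik.1 = n ∨ ik'.1 = n then
        2 * |(ik'.1 : ℤ) - (ik.1 : ℤ)| + 3 ≤ ik'.2 - ik.2 ∧
          (ik'.2 - ik.2) % 4 = (2 * |(ik'.1 : ℤ) - (ik.1 : ℤ)| - 1) % 4
      else
        2 * |(ik'.1 : ℤ) - (ik.1 : ℤ)| + 4 ≤ ik'.2 - ik.2 ∧
          (ik'.2 - ik.2) % 4 = (2 * |(ik'.1 : ℤ) - (ik.1 : ℤ)|) % 4

/-- A snake: a sequence of points of `X`, each in snake position w.r.t. the previous one. -/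
def IsSnake (S : Setting) {T : ℕ} (w : Fin T → ℕ × ℤ) : Prop :=
  (∀ t, w t ∈ X S) ∧
  ∀ (t : Fin T) (h : (t : ℕ) + 1 < T), SnakePos S (w t) (w ⟨(t : ℕ) + 1, h⟩)

/-- `p` is strictly above `p'`. -/
def StrictlyAbove (p p' : List (ℝ × ℝ)) : Prop :=
  ∀ a ∈ p, ∀ b ∈ p', a.1 = b.1 → a.2 < b.2

/-- A tuple of paths is non-overlapping. -/
def NonOverlapping {T : ℕ} (ps : Fin T → List (ℝ × ℝ)) : Prop :=
  ∀ s t : Fin T, s < t → StrictlyAbove (ps s) (ps t)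

/-- The set `𝒫̄` of non-overlapping tuples of paths attached to a snake. -/
def PBar (S : Setting) {T : ℕ} (w : Fin T → ℕ × ℤ) : Set (Fin T → List (ℝ × ℝ)) :=
  {ps | (∀ t, ps t ∈ P S (w t).1 (w t).2) ∧ NonOverlapping ps}

/-- The product `∏_t m(p_t)` of the monomials of a tuple of paths. -/
noncomputable def tmon (S : Setting) {T : ℕ} (ps : Fin T → List (ℝ × ℝ)) : (ℕ × ℤ) → ℤ :=
  ∑ t, mon S (ps t)

/-- Lowering move at `jl` on a tuple of paths: one component is lowered, the others
are unchanged. -/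
def TLoweredTo (S : Setting) {T : ℕ} (w : Fin T → ℕ × ℤ) (jl : ℕ × ℤ)
    (ps ps' : Fin T → List (ℝ × ℝ)) : Prop :=
  ∃ t, LoweredTo S (w t).1 (w t).2 jl.1 jl.2 (ps t) (ps' t) ∧ ∀ s, s ≠ t → ps' s = ps s

/-- Sequences of raising/lowering moves on a single path; the list records, for each move,
whether it was a lowering move (`true`) or a raising move (`false`), and its site. -/
inductive MoveSeq (S : Setting) (i : ℕ) (k : ℤ) :
    List (ℝ × ℝ) → List (ℝ × ℝ) → List (Bool × (ℕ × ℤ)) → Prop where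
  | nil (p : List (ℝ × ℝ)) : MoveSeq S i k p p []
  | lower {p q r : List (ℝ × ℝ)} {jl : ℕ × ℤ} {ms : List (Bool × (ℕ × ℤ))} :
      jl ∈ W S → LoweredTo S i k jl.1 jl.2 p q → MoveSeq S i k q r ms →
      MoveSeq S i k p r ((true, jl) :: ms)
  | raise {p q r : List (ℝ × ℝ)} {jl : ℕ × ℤ} {ms : List (Bool × (ℕ × ℤ))} :
      jl ∈ W S → LoweredTo S i k jl.1 jl.2 q p → MoveSeq S i k q r ms →
      MoveSeq S i k p r ((false, jl) :: ms)

/-- Sequences of raising/lowering moves on tuples of paths, all of whose intermediate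
tuples are non-overlapping. -/
inductive TMoveSeq (S : Setting) {T : ℕ} (w : Fin T → ℕ × ℤ) :
    (Fin T → List (ℝ × ℝ)) → (Fin T → List (ℝ × ℝ)) → List (Bool × (ℕ × ℤ)) → Prop where
  | nil (ps : Fin T → List (ℝ × ℝ)) : TMoveSeq S w ps ps []
  | lower {ps qs rs : Fin T → List (ℝ × ℝ)} {jl : ℕ × ℤ} {ms : List (Bool × (ℕ × ℤ))} :
      jl ∈ W S → TLoweredTo S w jl ps qs → NonOverlapping qs →
      TMoveSeq S w qs rs ms → TMoveSeq S w ps rs ((true, jl) :: ms)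
  | raise {ps qs rs : Fin T → List (ℝ × ℝ)} {jl : ℕ × ℤ} {ms : List (Bool × (ℕ × ℤ))} :
      jl ∈ W S → TLoweredTo S w jl qs ps → NonOverlapping qs →
      TMoveSeq S w qs rs ms → TMoveSeq S w ps rs ((false, jl) :: ms)

/-- Sequences of lowering moves on tuples of paths, all of whose intermediate tuples
are non-overlapping; the list records the sites, in order. -/
inductive TLowerSeq (S : Setting) {T : ℕ} (w : Fin T → ℕ × ℤ) :
    (Fin T → List (ℝ × ℝ)) → (Fin T → List (ℝ × ℝ)) → List (ℕ × ℤ) → Prop where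
  | nil (ps : Fin T → List (ℝ × ℝ)) : TLowerSeq S w ps ps []
  | cons {ps qs rs : Fin T → List (ℝ × ℝ)} {jl : ℕ × ℤ} {ms : List (ℕ × ℤ)} :
      jl ∈ W S → TLoweredTo S w jl ps qs → NonOverlapping qs →
      TLowerSeq S w qs rs ms → TLowerSeq S w ps rs (jl :: ms)

/-- Weak order on paths with the same x-coordinates: `p` is weakly above `p'`. -/
def WeaklyAbove (p p' : List (ℝ × ℝ)) : Prop :=
  p.length = p'.length ∧ ∀ r, r < p.length → (pt p r).2 ≤ (pt p' r).2

/-- `p` is weakly below `p'`. -/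
def WeaklyBelow (p p' : List (ℝ × ℝ)) : Prop :=
  p.length = p'.length ∧ ∀ r, r < p.length → (pt p' r).2 ≤ (pt p r).2

/-- The path `top(p, p')`. -/
def topPath (p p' : List (ℝ × ℝ)) : List (ℝ × ℝ) :=
  List.zipWith (fun a b => (a.1, min a.2 b.2)) p p'

/-- The distinguished point contained in the highest path `p⁺_{i,k}`. -/
def highPoint : Setting → ℕ → ℤ → ℝ × ℝ
  | .A _, i, k => ((i : ℝ), (k : ℝ))
  | .B n ε, i, k =>
      if i = n then (2 * (n : ℝ) - 1, (k : ℝ) - ε)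
      else (((iotaB n (i, k)).1 : ℝ), ((iotaB n (i, k)).2 : ℝ))

/-- The distinguished point contained in the lowest path `p⁻_{i,k}`. -/
def lowPoint : Setting → ℕ → ℤ → ℝ × ℝ
  | .A n, i, k => ((n : ℝ) + 1 - (i : ℝ), (k : ℝ) + (n : ℝ) + 1)
  | .B n ε, i, k =>
      if i = n then (2 * (n : ℝ) - 1, (k : ℝ) + 4 * (n : ℝ) - 2 + ε)
      else (((iotaB n (i, k + 4 * (n : ℤ) - 2)).1 : ℝ),
            ((iotaB n (i, k + 4 * (n : ℤ) - 2)).2 : ℝ))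

/-- The highest path `p⁺_{i,k}` : the path of `𝒫_{i,k}` with no lower corners. -/
noncomputable def highestPath (S : Setting) (i : ℕ) (k : ℤ) : List (ℝ × ℝ) :=
  Classical.epsilon fun p => p ∈ P S i k ∧ Cp S p false = ∅

/-- The lowest path `p⁻_{i,k}` : the path of `𝒫_{i,k}` with no upper corners. -/
noncomputable def lowestPath (S : Setting) (i : ℕ) (k : ℤ) : List (ℝ × ℝ) :=
  Classical.epsilon fun p => p ∈ P S i k ∧ Cp S p true = ∅

/-!
In the paper's pictures the second coordinate `y` of a path grows downwards, so an upper corner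
is a valley of the sequence of heights `y_r`. A sequence of steps `±c` without valleys rises at
full speed and then descends at full speed: it is the tent spanned by its two ends. Conversely, a
`c`-Lipschitz sequence through the apex of that tent is squeezed onto it.

In type `A` the lowest path is therefore the tent on `[0, N+1]`, with apex `(N+1-i, k+N+1)`. In
type `B` a path has one more kind of upper corner, at abscissa `2N-1`: its end `(2N-1, ℓ-ε)` is
one when its last step descends, unless `(2N-1, ℓ+ε)` is on the path too. For `i = N` the lowest
path thus rises at every step. For `i < N` the first half has to rise at every step; the second
half, which must end at a smaller height than the first, cannot, so it ends with a descending
step that only the end of the first half can compensate. This fixes the end of the second half,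
which is then the tent with apex at index `i`, i.e. at `ι(i, k+4N-2)`. Conversely, through that
point the Lipschitz bounds leave an integer gap in `[2, 2+2ε)` between the two halves at index
`N-1`, which pins down both halves.
-/

lemma intCast_ne_of_pos_of_lt_one {z : ℤ} {x : ℝ} (h₀ : 0 < x) (h₁ : x < 1) : (z : ℝ) ≠ x := by
  rintro rfl
  have : (0 : ℤ) < z := by exact_mod_cast h₀
  have : z < 1 := by exact_mod_cast h₁
  omega

section StepSequences

variable {y : ℕ → ℝ} {c : ℝ}

def IsValley (y : ℕ → ℝ) (r : ℕ) : Prop := y r < y (r - 1) ∧ y r < y (r + 1)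

def tent (α β c : ℝ) (m r : ℕ) : ℝ := min (α + r * c) (β + ((m : ℝ) - r) * c)

lemma abs_sub_le_of_forall_abs_succ_sub_le {a b : ℕ} (hab : a ≤ b)
    (h : ∀ r, a ≤ r → r < b → |y (r + 1) - y r| ≤ c) : |y b - y a| ≤ ((b : ℝ) - a) * c := by
  induction b, hab using Nat.le_induction with
  | base => simp
  | succ b hab ih =>
    have h₁ := ih fun r h₁ h₂ => h r h₁ (by omega)
    have h₂ := h b hab (by omega)
    calc |y (b + 1) - y a| ≤ |y (b + 1) - y b| + |y b - y a| := abs_sub_le _ _ _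
      _ ≤ (((b + 1 : ℕ) : ℝ) - a) * c := by push_cast; linarith

lemma eq_add_of_forall_succ_eq_add {a b : ℕ} (hab : a ≤ b)
    (h : ∀ r, a ≤ r → r < b → y (r + 1) = y r + c) : y b = y a + ((b : ℝ) - a) * c := by
  induction b, hab using Nat.le_induction with
  | base => simp
  | succ b hab ih =>
    rw [h b hab (by omega), ih fun r h₁ h₂ => h r h₁ (by omega)]
    push_cast; ring

lemma eq_add_of_eq_add_of_abs_le {a t r : ℕ} (har : a ≤ r) (hrt : r ≤ t)
    (h : ∀ s, a ≤ s → s < t → |y (s + 1) - y s| ≤ c) (ht : y t = y a + ((t : ℝ) - a) * c) :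
    y r = y a + ((r : ℝ) - a) * c := by
  have h₁ := abs_sub_le_of_forall_abs_succ_sub_le har fun s h₁ h₂ => h s h₁ (by omega)
  have h₂ := abs_sub_le_of_forall_abs_succ_sub_le hrt fun s h₁ h₂ => h s (by omega) h₂
  rw [abs_le] at h₁ h₂
  linarith [h₁.2, h₂.2]

lemma eq_add_of_eq_add_of_abs_le' {t b r : ℕ} (htr : t ≤ r) (hrb : r ≤ b)
    (h : ∀ s, t ≤ s → s < b → |y (s + 1) - y s| ≤ c) (ht : y t = y b + ((b : ℝ) - t) * c) :
    y r = y b + ((b : ℝ) - r) * c := by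
  have h₁ := abs_sub_le_of_forall_abs_succ_sub_le htr fun s h₁ h₂ => h s h₁ (by omega)
  have h₂ := abs_sub_le_of_forall_abs_succ_sub_le hrb fun s h₁ h₂ => h s (by omega) h₂
  rw [abs_le] at h₁ h₂
  linarith [h₁.1, h₂.1]

lemma exists_int_of_forall_abs_succ_sub_eq {m : ℕ} (h : ∀ r < m, |y (r + 1) - y r| = c) :
    ∀ r ≤ m, ∃ z : ℤ, y r = y 0 + ((r : ℝ) + 2 * z) * c := by
  intro r hr
  induction r with
  | zero => exact ⟨0, by simp⟩
  | succ r ih =>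
    obtain ⟨z, hz⟩ := ih (by omega)
    have hc := h r (by omega)
    rcases abs_choice (y (r + 1) - y r) with h' | h'
    · exact ⟨z, by push_cast; linarith⟩
    · exact ⟨z - 1, by push_cast; linarith⟩

lemma lt_succ_of_lt_succ_of_not_isValley {m s : ℕ} (hne : ∀ r < m, y (r + 1) ≠ y r)
    (hv : ∀ r, 0 < r → r < m → ¬ IsValley y r) (hs : s < m) (hup : y s < y (s + 1)) :
    ∀ r ≤ s, y r < y (r + 1) := by
  suffices ∀ d ≤ s, y (s - d) < y (s - d + 1) from fun r hr => by
    simpa [Nat.sub_sub_self hr] using this (s - r) (Nat.sub_le s r)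
  intro d
  induction d with
  | zero => simpa using hup
  | succ d ih =>
    intro hd
    have hnext : y (s - (d + 1) + 1) < y (s - (d + 1) + 1 + 1) := by
      rw [show s - (d + 1) + 1 = s - d by omega]; exact ih (by omega)
    refine lt_of_le_of_ne (not_lt.mp fun hdown => hv (s - (d + 1) + 1) (by omega) (by omega)
      ⟨by simpa using hdown, hnext⟩) (hne _ (by omega)).symm

lemma eq_tent_of_or {m r : ℕ} (h : ∀ s < m, |y (s + 1) - y s| ≤ c) (hr : r ≤ m)
    (hor : y r = y 0 + r * c ∨ y r = y m + ((m : ℝ) - r) * c) : y r = tent (y 0) (y m) c m r := by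
  have h₁ := abs_sub_le_of_forall_abs_succ_sub_le r.zero_le fun s _ hs => h s (by omega)
  have h₂ := abs_sub_le_of_forall_abs_succ_sub_le hr fun s _ hs => h s hs
  rw [abs_le] at h₁ h₂
  push_cast at h₁
  refine le_antisymm (le_min (by linarith) (by linarith)) (min_le_iff.mpr ?_)
  exact hor.imp (fun e => e.ge) (fun e => e.ge)

lemma eq_tent_of_not_isValley {m r : ℕ} (hc : 0 < c) (h : ∀ s < m, |y (s + 1) - y s| = c)
    (hv : ∀ s, 0 < s → s < m → ¬ IsValley y s) (hr : r ≤ m) : y r = tent (y 0) (y m) c m r := by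
  have hne : ∀ s < m, y (s + 1) ≠ y s := fun s hs e => by
    have := h s hs; rw [e, sub_self, abs_zero] at this; linarith
  have hup : ∀ s < m, y s < y (s + 1) → y (s + 1) = y s + c := fun s hs hlt => by
    have := h s hs; rw [abs_of_pos (by linarith)] at this; linarith
  have hdown : ∀ s < m, ¬ y s < y (s + 1) → y (s + 1) = y s - c := fun s hs hlt => by
    have := h s hs
    rw [abs_of_neg (sub_neg.mpr (lt_of_le_of_ne (not_lt.mp hlt) (hne s hs)))] at this; linarith
  refine eq_tent_of_or (fun s hs => (h s hs).le) hr ?_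
  rcases eq_or_lt_of_le hr with rfl | hrm
  · right; simp
  by_cases hr_up : y r < y (r + 1)
  · left
    have := eq_add_of_forall_succ_eq_add r.zero_le fun s _ hs => hup s (by omega)
      (lt_succ_of_lt_succ_of_not_isValley hne hv hrm hr_up s hs.le)
    simpa using this
  · right
    have := eq_add_of_forall_succ_eq_add (c := -c) hr fun s hrs hs => hdown s hs fun hs_up =>
      hr_up (lt_succ_of_lt_succ_of_not_isValley hne hv hs hs_up r hrs)
    linarith

lemma eq_tent_of_peak {m t r : ℕ} (h : ∀ s < m, |y (s + 1) - y s| ≤ c) (htm : t ≤ m) (hr : r ≤ m)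
    (h₀ : y t = y 0 + t * c) (hm : y t = y m + ((m : ℝ) - t) * c) :
    y r = tent (y 0) (y m) c m r := by
  refine eq_tent_of_or h hr ?_
  rcases le_total r t with hrt | htr
  · left
    simpa using eq_add_of_eq_add_of_abs_le r.zero_le hrt (fun s _ hs => h s (by omega))
      (by simpa using h₀)
  · exact Or.inr (eq_add_of_eq_add_of_abs_le' htr hr (fun s _ hs => h s hs) hm)

variable {α β : ℝ} {m t r : ℕ}

lemma tent_eq_left (hc : 0 ≤ c) (hcross : α + t * c = β + ((m : ℝ) - t) * c) (hrt : r ≤ t) :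
    tent α β c m r = α + r * c := by
  have : (r : ℝ) ≤ t := by exact_mod_cast hrt
  exact min_eq_left (by nlinarith)

lemma tent_eq_right (hc : 0 ≤ c) (hcross : α + t * c = β + ((m : ℝ) - t) * c) (htr : t ≤ r) :
    tent α β c m r = β + ((m : ℝ) - r) * c := by
  have : (t : ℝ) ≤ r := by exact_mod_cast htr
  exact min_eq_right (by nlinarith)

lemma tent_pred_lt_or_succ_lt (hc : 0 < c) (hcross : α + t * c = β + ((m : ℝ) - t) * c)
    (hr : 0 < r) :
    tent α β c m (r - 1) < tent α β c m r ∨ tent α β c m (r + 1) < tent α β c m r := by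
  rcases le_total r t with hrt | htr
  · left
    rw [tent_eq_left hc.le hcross hrt, tent_eq_left hc.le hcross (by omega), Nat.cast_sub hr]
    push_cast; linarith
  · right
    rw [tent_eq_right hc.le hcross htr, tent_eq_right hc.le hcross (by omega)]
    push_cast; linarith

end StepSequences

section Lists

variable {p q : List (ℝ × ℝ)} {v : ℝ × ℝ} {r : ℕ}

lemma pt_eq_getElem (h : r < p.length) : pt p r = p[r] := by
  simp [pt, List.getD_eq_getElem?_getD, h]

lemma mem_iff_exists_pt : v ∈ p ↔ ∃ r < p.length, pt p r = v := by
  simp only [List.mem_iff_getElem]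
  exact exists_congr fun r => ⟨fun ⟨h, e⟩ => ⟨h, by rwa [pt_eq_getElem h]⟩,
    fun ⟨h, e⟩ => ⟨h, by rwa [pt_eq_getElem h] at e⟩⟩

lemma pt_mem (h : r < p.length) : pt p r ∈ p := mem_iff_exists_pt.mpr ⟨r, h, rfl⟩

lemma ext_pt (hl : p.length = q.length) (h : ∀ r < p.length, pt p r = pt q r) : p = q :=
  List.ext_getElem hl fun r h₁ h₂ => by rw [← pt_eq_getElem h₁, ← pt_eq_getElem h₂, h r h₁]

lemma pt_map_range {m : ℕ} {f : ℕ → ℝ × ℝ} (h : r < m) : pt ((List.range m).map f) r = f r := by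
  simp [pt, List.getD_eq_getElem?_getD, h]

lemma pt_append_of_lt (h : r < p.length) : pt (p ++ q) r = pt p r := by
  rw [pt_eq_getElem (by simp; omega), pt_eq_getElem h, List.getElem_append_left h]

lemma pt_append_reverse {n : ℕ} (hp : p.length = n + 1) (hq : q.length = n + 1) (hr : r ≤ n) :
    pt (p ++ q.reverse) (2 * n + 1 - r) = pt q r := by
  rw [pt_eq_getElem (by simp; omega), pt_eq_getElem (by omega),
    List.getElem_append_right (by omega), List.getElem_reverse]
  congr 1
  omega

end Lists

section Valleys

variable {a b c : List (ℝ × ℝ)} {n u : ℕ}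

lemma isValley_append_iff (hu : u + 1 < a.length) :
    IsValley (fun r => (pt (a ++ c) r).2) u ↔ IsValley (fun r => (pt a r).2) u := by
  simp only [IsValley, pt_append_of_lt hu, pt_append_of_lt (show u < a.length by omega),
    pt_append_of_lt (show u - 1 < a.length by omega)]

lemma isValley_append_reverse_iff (ha : a.length = n + 1) (hb : b.length = n + 1) {s : ℕ}
    (hs : 0 < s) (hsn : s < n) :
    IsValley (fun r => (pt (a ++ b.reverse) r).2) (2 * n + 1 - s) ↔
      IsValley (fun r => (pt b r).2) s := by
  simp only [IsValley, show 2 * n + 1 - s - 1 = 2 * n + 1 - (s + 1) by omega,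
    show 2 * n + 1 - s + 1 = 2 * n + 1 - (s - 1) by omega, pt_append_reverse ha hb hsn.le,
    pt_append_reverse ha hb (show s + 1 ≤ n by omega),
    pt_append_reverse ha hb (show s - 1 ≤ n by omega)]
  exact and_comm

end Valleys

section TypeA

variable {n i : ℕ} {k : ℤ} {p : List (ℝ × ℝ)}

def pathA (n : ℕ) (h : ℕ → ℝ) : List (ℝ × ℝ) :=
  (List.range (n + 2)).map fun r : ℕ => ((r : ℝ), h r)

def lowestA (n i : ℕ) (k : ℤ) : List (ℝ × ℝ) :=
  pathA n (tent ((i : ℝ) + k) ((n : ℝ) + 1 - i + k) 1 (n + 1))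

lemma length_pathA (h : ℕ → ℝ) : (pathA n h).length = n + 2 := by simp [pathA]

lemma pt_pathA {h : ℕ → ℝ} {r : ℕ} (hr : r < n + 2) : pt (pathA n h) r = ((r : ℝ), h r) :=
  pt_map_range hr

lemma eq_pathA (hp : p ∈ pathsA n i k) {h : ℕ → ℝ} (hh : ∀ r ≤ n + 1, (pt p r).2 = h r) :
    p = pathA n h := by
  refine ext_pt (by rw [hp.1, length_pathA]) fun r hr => ?_
  rw [hp.1] at hr
  rw [pt_pathA hr]
  exact Prod.ext (hp.2.1 r hr) (hh r (by omega))

lemma abs_steps_of_mem_pathsA (hp : p ∈ pathsA n i k) :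
    ∀ r < n + 1, |(pt p (r + 1)).2 - (pt p r).2| = 1 := fun r hr => by
  rcases hp.2.2.2.2 r (by omega) with h | h <;> simp [h]

lemma tent_crossA (hin : i ≤ n) :
    (i : ℝ) + k + ((n + 1 - i : ℕ) : ℝ) * 1 =
      (n : ℝ) + 1 - i + k + (((n + 1 : ℕ) : ℝ) - ((n + 1 - i : ℕ) : ℝ)) * 1 := by
  push_cast [Nat.cast_sub (show i ≤ n + 1 by omega)]; ring

lemma lowestA_mem (hin : i ≤ n) : lowestA n i k ∈ pathsA n i k := by
  have hc := tent_crossA (k := k) hin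
  unfold lowestA
  refine ⟨length_pathA _, fun r hr => by rw [pt_pathA hr], ?_, ?_, fun r hr => ?_⟩
  · rw [pt_pathA (by omega), tent_eq_left zero_le_one hc (Nat.zero_le _)]; simp
  · rw [pt_pathA (by omega), tent_eq_right zero_le_one hc (by omega)]; simp
  rw [pt_pathA (by omega), pt_pathA (by omega)]
  rcases lt_or_ge r (n + 1 - i) with hrt | htr
  · left
    rw [tent_eq_left zero_le_one hc hrt, tent_eq_left zero_le_one hc hrt.le]; push_cast; ring
  · right
    rw [tent_eq_right zero_le_one hc (by omega), tent_eq_right zero_le_one hc htr]; push_cast; ring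

lemma cornersA_eq_empty_iff (hp : p ∈ pathsA n i k) :
    Cp (.A n) p true = ∅ ↔ ∀ r, 0 < r → r < n + 1 → ¬ IsValley (fun s => (pt p s).2) r := by
  have hsteps := abs_steps_of_mem_pathsA hp
  simp only [Cp, if_true, Set.eq_empty_iff_forall_notMem]
  constructor
  · rintro hC r hr hrn ⟨hprev, hnext⟩
    obtain ⟨z, hz⟩ :=
      exists_int_of_forall_abs_succ_sub_eq (y := fun s => (pt p s).2) hsteps r hrn.le
    have h₁ := hsteps (r - 1) (by omega)
    have h₂ := hsteps r hrn
    rw [Nat.sub_add_cancel hr] at h₁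
    rw [abs_sub_comm, abs_of_pos (by linarith)] at h₁
    rw [abs_of_pos (by linarith)] at h₂
    refine hC (r, i + k + r + 2 * z) ⟨hr, by omega, Prod.ext (hp.2.1 r (by omega)) ?_, ?_, ?_⟩
    all_goals rw [hp.2.2.1] at hz; push_cast; linarith
  · rintro hv ⟨r, l⟩ ⟨hr, hrn, hpt, hprev, hnext⟩
    refine hv r hr (by omega) ⟨?_, ?_⟩ <;> simp only [hprev, hnext, hpt] <;> linarith

lemma lowestA_cornersA (hin : i ≤ n) : Cp (.A n) (lowestA n i k) true = ∅ := by
  refine (cornersA_eq_empty_iff (lowestA_mem hin)).mpr fun r hr hrn ⟨hprev, hnext⟩ => ?_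
  simp only [lowestA, pt_pathA (show r < n + 2 by omega), pt_pathA (show r - 1 < n + 2 by omega),
    pt_pathA (show r + 1 < n + 2 by omega)] at hprev hnext
  rcases tent_pred_lt_or_succ_lt one_pos (tent_crossA (k := k) hin) hr with h | h <;> linarith

theorem cornersA_eq_empty_iff_eq_lowestA (hin : i ≤ n) (hp : p ∈ pathsA n i k) :
    Cp (.A n) p true = ∅ ↔ p = lowestA n i k := by
  refine ⟨fun hC => eq_pathA hp fun r hr => ?_, fun h => h ▸ lowestA_cornersA hin⟩
  have := eq_tent_of_not_isValley one_pos (abs_steps_of_mem_pathsA hp)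
    ((cornersA_eq_empty_iff hp).mp hC) hr
  rwa [hp.2.2.1, hp.2.2.2.1] at this

theorem lowPointA_mem_iff_eq_lowestA (hin : i ≤ n) (hp : p ∈ pathsA n i k) :
    lowPoint (.A n) i k ∈ p ↔ p = lowestA n i k := by
  have ht : ((n + 1 - i : ℕ) : ℝ) = (n : ℝ) + 1 - i := by
    push_cast [Nat.cast_sub (show i ≤ n + 1 by omega)]; ring
  constructor
  · intro hmem
    obtain ⟨t, htn, e⟩ := mem_iff_exists_pt.mp hmem
    rw [hp.1] at htn
    have htx : (t : ℝ) = ((n + 1 - i : ℕ) : ℝ) := by rw [ht, ← hp.2.1 t htn, e]; rfl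
    have hty : (pt p t).2 = (k : ℝ) + n + 1 := by rw [e]; rfl
    refine eq_pathA hp fun r hr => ?_
    have := eq_tent_of_peak (y := fun s => (pt p s).2) (t := t)
      (fun s hs => (abs_steps_of_mem_pathsA hp s hs).le) (by omega) hr
      (by rw [hty, hp.2.2.1, htx, ht]; ring)
      (by rw [hty, hp.2.2.2.1, htx, ht]; push_cast; ring)
    rwa [hp.2.2.1, hp.2.2.2.1] at this
  · rintro rfl
    refine mem_iff_exists_pt.mpr ⟨n + 1 - i, by rw [hp.1]; omega, ?_⟩
    rw [lowestA, pt_pathA (by omega), tent_eq_left zero_le_one (tent_crossA hin) le_rfl, ht]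
    simp only [lowPoint]
    congr 1; ring

end TypeA

section SpinPaths

variable {n : ℕ} {ε : ℝ} {l : ℤ} {p : List (ℝ × ℝ)} {r : ℕ}

def spinX (n : ℕ) (l : ℤ) (r : ℕ) : ℝ := if l % 4 = 3 then 2 * r else 4 * n - 2 - 2 * r

def spinPath (n : ℕ) (l : ℤ) (h : ℕ → ℝ) (top : ℝ) : List (ℝ × ℝ) :=
  (List.range (n + 1)).map fun r : ℕ =>
    if r < n then (spinX n l r, h r) else (2 * (n : ℝ) - 1, top)

def lowestSpin (n : ℕ) (ε : ℝ) (l : ℤ) : List (ℝ × ℝ) :=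
  spinPath n l (fun r => l + 2 * n - 1 + 2 * r) (l + 4 * n - 2 + ε)

lemma spinX_ne : spinX n l r ≠ 2 * n - 1 := by
  unfold spinX
  split_ifs <;> intro h
  · have : (2 * r : ℤ) = 2 * n - 1 := by exact_mod_cast h
    omega
  · have : (4 * n - 2 - 2 * r : ℤ) = 2 * n - 1 := by exact_mod_cast h
    omega

variable {h : ℕ → ℝ} {top : ℝ}

lemma length_spinPath : (spinPath n l h top).length = n + 1 := by simp [spinPath]

lemma pt_spinPath_of_lt (hr : r < n) : pt (spinPath n l h top) r = (spinX n l r, h r) := by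
  rw [spinPath, pt_map_range (by omega), if_pos hr]

lemma pt_spinPath_self : pt (spinPath n l h top) n = (2 * (n : ℝ) - 1, top) := by
  rw [spinPath, pt_map_range (by omega), if_neg (lt_irrefl n)]

lemma spinPath_mem (hn : 0 < n) (h₀ : h 0 = l + 2 * n - 1)
    (hsteps : ∀ r, r + 2 ≤ n → h (r + 1) - h r = 2 ∨ h (r + 1) - h r = -2)
    (hlast : top - h (n - 1) = 1 + ε ∨ top - h (n - 1) = -(1 + ε)) :
    spinPath n l h top ∈ pathsBspin n ε l := by
  refine ⟨length_spinPath, ?_, by rw [pt_spinPath_self], by rw [pt_spinPath_of_lt hn, h₀],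
    fun r hr => ?_, ?_⟩
  · split_ifs with hl <;> intro r hr <;> simp [pt_spinPath_of_lt hr, spinX, hl]
  · rw [pt_spinPath_of_lt (by omega), pt_spinPath_of_lt (by omega)]; exact hsteps r hr
  · rw [pt_spinPath_self, pt_spinPath_of_lt (by omega)]; exact hlast

lemma fst_pt_of_mem_pathsBspin (hp : p ∈ pathsBspin n ε l) (hr : r < n) :
    (pt p r).1 = spinX n l r := by
  have hx := hp.2.1
  unfold spinX
  split_ifs at hx ⊢ <;> exact hx r hr

lemma eq_spinPath (hp : p ∈ pathsBspin n ε l) (hh : ∀ r < n, (pt p r).2 = h r)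
    (htop : (pt p n).2 = top) : p = spinPath n l h top := by
  refine ext_pt (by rw [hp.1, length_spinPath]) fun r hr => ?_
  rw [hp.1] at hr
  rcases lt_or_eq_of_le (Nat.lt_succ_iff.mp hr) with hr | rfl
  · rw [pt_spinPath_of_lt hr]; exact Prod.ext (fst_pt_of_mem_pathsBspin hp hr) (hh r hr)
  · rw [pt_spinPath_self]; exact Prod.ext hp.2.2.1 htop

lemma eq_pt_of_mem_pathsBspin {v : ℝ × ℝ} (hp : p ∈ pathsBspin n ε l) (hv : v ∈ p)
    (hx : v.1 = 2 * n - 1) : v = pt p n := by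
  obtain ⟨r, hr, rfl⟩ := mem_iff_exists_pt.mp hv
  rw [hp.1] at hr
  rcases lt_or_eq_of_le (Nat.lt_succ_iff.mp hr) with hr | rfl
  · exact absurd (fst_pt_of_mem_pathsBspin hp hr ▸ hx) spinX_ne
  · rfl

lemma abs_steps_of_mem_pathsBspin (hp : p ∈ pathsBspin n ε l) :
    ∀ r < n - 1, |(pt p (r + 1)).2 - (pt p r).2| = 2 := fun r hr => by
  rcases hp.2.2.2.2.1 r (by omega) with h | h <;> simp [h]

lemma exists_height_eq_of_mem_pathsBspin (hp : p ∈ pathsBspin n ε l) (hr : r < n) :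
    ∃ z : ℤ, (pt p r).2 = l + 2 * n - 1 + 2 * r + 4 * z := by
  obtain ⟨z, hz⟩ := exists_int_of_forall_abs_succ_sub_eq (y := fun s => (pt p s).2)
    (abs_steps_of_mem_pathsBspin hp) r (by omega)
  exact ⟨z, by rw [hz, hp.2.2.2.1]; ring⟩

lemma height_pred_le_of_mem_pathsBspin (hp : p ∈ pathsBspin n ε l) (hn : 0 < n) :
    (pt p (n - 1)).2 ≤ l + 4 * n - 3 := by
  have := abs_sub_le_of_forall_abs_succ_sub_le (y := fun s => (pt p s).2) (Nat.zero_le (n - 1))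
    fun s _ hs => (abs_steps_of_mem_pathsBspin hp s hs).le
  rw [abs_le, Nat.cast_sub hn, hp.2.2.2.1] at this
  push_cast at this
  linarith [this.2]

lemma lowestSpin_mem (hn : 0 < n) : lowestSpin n ε l ∈ pathsBspin n ε l :=
  spinPath_mem hn (by simp) (fun r _ => Or.inl (by push_cast; ring))
    (Or.inl (by rw [Nat.cast_sub hn]; push_cast; ring))

lemma eq_lowestSpin (hp : p ∈ pathsBspin n ε l) (hn : 0 < n)
    (hpred : (pt p (n - 1)).2 = l + 4 * n - 3) (hlast : (pt p n).2 = (pt p (n - 1)).2 + (1 + ε)) :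
    p = lowestSpin n ε l := by
  refine eq_spinPath hp (fun r hr => ?_) (by rw [hlast, hpred]; ring)
  have := eq_add_of_eq_add_of_abs_le (y := fun s => (pt p s).2) (Nat.zero_le r)
    (show r ≤ n - 1 by omega) (fun s _ hs => (abs_steps_of_mem_pathsBspin hp s hs).le)
    (by rw [hpred, hp.2.2.2.1, Nat.cast_sub hn]; push_cast; ring)
  rw [this, hp.2.2.2.1]; push_cast; ring

lemma eq_lowestSpin_of_le_top (hp : p ∈ pathsBspin n ε l) (hn : 0 < n) (hε : 0 < ε)
    (htop : l + 4 * n - 2 + ε ≤ (pt p n).2) : p = lowestSpin n ε l := by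
  have hpred := height_pred_le_of_mem_pathsBspin hp hn
  rcases hp.2.2.2.2.2 with hlast | hlast
  · exact eq_lowestSpin hp hn (by linarith) (by linarith)
  · linarith

lemma eq_lowestSpin_of_not_isValley (hp : p ∈ pathsBspin n ε l) (hn : 0 < n) (hε : 0 < ε)
    (hv : ∀ s, 0 < s → s < n → ¬ IsValley (fun r => (pt p r).2) s)
    (hup : (pt p (n - 1)).2 < (pt p n).2) : p = lowestSpin n ε l := by
  have hsteps := abs_steps_of_mem_pathsBspin hp
  have hne : ∀ r < n, (pt p (r + 1)).2 ≠ (pt p r).2 := fun r hr e => by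
    rcases lt_or_eq_of_le (show r ≤ n - 1 by omega) with hr | rfl
    · have := hsteps r hr; rw [e, sub_self, abs_zero] at this; norm_num at this
    · rw [Nat.sub_one_add_one hn.ne'] at e; rw [e] at hup; exact lt_irrefl _ hup
  have hall_up := lt_succ_of_lt_succ_of_not_isValley (y := fun r => (pt p r).2) hne hv
    (Nat.sub_lt hn one_pos) (by rwa [Nat.sub_one_add_one hn.ne'])
  have hpred := eq_add_of_forall_succ_eq_add (y := fun r => (pt p r).2) (c := 2)
    (Nat.zero_le (n - 1)) fun r _ hr => by
      have := hsteps r hr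
      rw [abs_of_pos (sub_pos.mpr (hall_up r hr.le))] at this
      linarith
  rw [hp.2.2.2.1, Nat.cast_sub hn] at hpred
  refine eq_lowestSpin hp hn (by rw [hpred]; push_cast; ring) ?_
  rcases hp.2.2.2.2.2 with hlast | hlast <;> linarith

end SpinPaths

section CornersB

variable {n : ℕ} {ε : ℝ} {Q b : List (ℝ × ℝ)} {l : ℤ}

lemma iotaB_snd (n : ℕ) (jl : ℕ × ℤ) : (iotaB n jl).2 = jl.2 := by
  unfold iotaB; split_ifs <;> rfl

lemma iotaB_fst_of_ne {s : ℕ} {c : ℤ} (hs : s ≠ n) :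
    (iotaB n (s, c)).1 = 2 * s ∨ (iotaB n (s, c)).1 = 4 * n - 2 - 2 * s := by
  unfold iotaB; rw [if_neg hs]; split_ifs <;> simp

lemma cast_iotaB_fst {s : ℕ} {c : ℤ} (hs : s ≠ n) (hl : l % 2 = 1)
    (hc : (2 * n + c - 2 * s) % 4 = (l - 1) % 4) : ((iotaB n (s, c)).1 : ℝ) = spinX n l s := by
  unfold iotaB spinX
  rw [if_neg hs]
  split_ifs <;> first | omega | push_cast; ring

lemma mem_cornersB_of_spin {l' : ℤ} (hl' : l' % 2 = 1) (hin : (2 * (n : ℝ) - 1, (l' : ℝ) - ε) ∈ Q)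
    (hout : (2 * (n : ℝ) - 1, (l' : ℝ) + ε) ∉ Q) : (n, l') ∈ Cp (.B n ε) Q true :=
  ⟨Or.inl ⟨rfl, hl'⟩, Or.inr ⟨rfl, hin, hout⟩⟩

lemma isValley_or_of_mem_cornersB {jl : ℕ × ℤ} (h : jl ∈ Cp (.B n ε) Q true) :
    (∃ u, 0 < u ∧ u + 1 < Q.length ∧ (pt Q u).1 ≠ 2 * n - 1 ∧ IsValley (fun r => (pt Q r).2) u) ∨
      ∃ l' : ℤ, (2 * (n : ℝ) - 1, (l' : ℝ) - ε) ∈ Q ∧ (2 * (n : ℝ) - 1, (l' : ℝ) + ε) ∉ Q := by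
  obtain ⟨-, ⟨u, hu, hu', hpt, -, hx, -, hv⟩ | ⟨-, hspin⟩⟩ := h
  · refine Or.inl ⟨u, hu, hu', fun e => hx ?_, hv⟩
    have e' : ((iotaB n jl).1 : ℝ) = 2 * n - 1 := by rw [← e, hpt]
    exact_mod_cast e'
  · exact Or.inr ⟨jl.2, hspin⟩

lemma not_isValley_of_cornersB_eq_empty (hC : Cp (.B n ε) Q true = ∅) (hb : b ∈ pathsBspin n ε l)
    (hl : l % 2 = 1) {s u : ℕ} (hs : 0 < s) (hsn : s < n) (hu : 0 < u) (hu' : u + 1 < Q.length)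
    (hQ : pt Q u = pt b s) : ¬ IsValley (fun r => (pt Q r).2) u := by
  intro hv
  obtain ⟨z, hz⟩ := exists_height_eq_of_mem_pathsBspin hb hsn
  have hι : ((iotaB n (s, l + 2 * n - 1 + 2 * s + 4 * z)).1 : ℝ) = spinX n l s :=
    cast_iotaB_fst (by omega) hl (by omega)
  have hmem : (s, l + 2 * n - 1 + 2 * s + 4 * z) ∈ Cp (.B n ε) Q true := by
    refine ⟨Or.inr ⟨hs, hsn, by omega⟩, Or.inl ⟨u, hu, hu', ?_, ?_⟩⟩
    · rw [hQ, hι, iotaB_snd, ← fst_pt_of_mem_pathsBspin hb hsn]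
      exact Prod.ext rfl (by rw [hz]; push_cast; rfl)
    · rcases iotaB_fst_of_ne (c := l + 2 * n - 1 + 2 * s + 4 * z) (show s ≠ n by omega)
        with h | h <;> rw [h] <;> exact ⟨by omega, by omega, by omega, hv⟩
  rw [hC] at hmem
  exact hmem

-- The last point of `b` is `(2N - 1, ℓ' - ε)` with `ℓ'` odd, a spin corner unless
-- `(2N - 1, ℓ' + ε)` is on the path too.
lemma mem_of_cornersB_eq_empty (hC : Cp (.B n ε) Q true = ∅) (hb : b ∈ pathsBspin n ε l)
    (hn : 0 < n) (hl : l % 2 = 1) (hbQ : pt b n ∈ Q)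
    (hlast : (pt b n).2 = (pt b (n - 1)).2 - (1 + ε)) :
    (2 * (n : ℝ) - 1, (pt b (n - 1)).2 - 1 + ε) ∈ Q := by
  by_contra hout
  obtain ⟨z, hz⟩ := exists_height_eq_of_mem_pathsBspin hb (show n - 1 < n by omega)
  have hmem := mem_cornersB_of_spin (n := n) (ε := ε) (Q := Q)
    (l' := l + 2 * n - 1 + 2 * (n - 1 : ℕ) + 4 * z - 1) (by omega)
    (by convert hbQ using 1; refine Prod.ext hb.2.2.1.symm ?_; rw [hlast, hz]; push_cast; ring)
    (by convert hout using 3; rw [hz]; push_cast; ring)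
  rw [hC] at hmem
  exact hmem

end CornersB

section SpinCase

variable {n : ℕ} {ε : ℝ} {l : ℤ} {p : List (ℝ × ℝ)}

lemma not_isValley_lowestSpin {s : ℕ} (hs : 0 < s) (hsn : s < n) :
    ¬ IsValley (fun r => (pt (lowestSpin n ε l) r).2) s := fun ⟨hprev, _⟩ => by
  simp only [lowestSpin, pt_spinPath_of_lt hsn, pt_spinPath_of_lt (show s - 1 < n by omega)]
    at hprev
  rw [Nat.cast_sub hs] at hprev
  push_cast at hprev
  linarith

lemma lowestSpin_cornersB (hn : 0 < n) (hε : 0 < ε) (hε' : ε < 1 / 2) :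
    Cp (.B n ε) (lowestSpin n ε l) true = ∅ := by
  refine Set.eq_empty_iff_forall_notMem.mpr fun jl hjl => ?_
  rcases isValley_or_of_mem_cornersB hjl with ⟨u, hu, hu', -, hv⟩ | ⟨l', hin, -⟩
  · rw [lowestSpin, length_spinPath] at hu'
    exact not_isValley_lowestSpin hu (by omega) hv
  · have := congrArg Prod.snd (eq_pt_of_mem_pathsBspin (lowestSpin_mem hn) hin rfl)
    rw [lowestSpin, pt_spinPath_self] at this
    exact intCast_ne_of_pos_of_lt_one (z := l' - (l + 4 * n - 2)) (x := 2 * ε) (by linarith)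
      (by linarith) (by push_cast; simp only at this; linarith)

theorem cornersB_eq_empty_iff_eq_lowestSpin (hn : 0 < n) (hε : 0 < ε) (hε' : ε < 1 / 2)
    (hl : l % 2 = 1) (hp : p ∈ pathsBspin n ε l) :
    Cp (.B n ε) p true = ∅ ↔ p = lowestSpin n ε l := by
  refine ⟨fun hC => ?_, fun h => h ▸ lowestSpin_cornersB hn hε hε'⟩
  refine eq_lowestSpin_of_not_isValley hp hn hε (fun s hs hsn => not_isValley_of_cornersB_eq_empty
    hC hp hl hs hsn hs (by rw [hp.1]; omega) rfl) ?_
  rcases hp.2.2.2.2.2 with h | h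
  · linarith
  · have hmem := mem_of_cornersB_eq_empty hC hp hn hl (pt_mem (by rw [hp.1]; omega))
      (by linarith)
    have := congrArg Prod.snd (eq_pt_of_mem_pathsBspin hp hmem rfl)
    simp only at this
    linarith

theorem top_mem_iff_eq_lowestSpin (hn : 0 < n) (hε : 0 < ε) (hp : p ∈ pathsBspin n ε l) :
    (2 * (n : ℝ) - 1, (l : ℝ) + 4 * n - 2 + ε) ∈ p ↔ p = lowestSpin n ε l := by
  refine ⟨fun hmem => eq_lowestSpin_of_le_top hp hn hε ?_, ?_⟩
  · rw [← eq_pt_of_mem_pathsBspin hp hmem rfl]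
  · rintro rfl
    rw [lowestSpin, ← pt_spinPath_self]
    exact pt_mem (by rw [length_spinPath]; omega)

end SpinCase

section PairedSpinPaths

variable {n i : ℕ} {ε : ℝ} {la lb : ℤ} {a b : List (ℝ × ℝ)}

lemma eq_of_spinX_eq {l : ℤ} {r s : ℕ} (h : spinX n l r = spinX n l s) : r = s := by
  unfold spinX at h
  split_ifs at h
  · exact_mod_cast (mul_right_injective₀ two_ne_zero h : (r : ℝ) = s)
  · have : (s : ℝ) = r := by linarith
    exact_mod_cast this.symm

lemma spinX_ne_spinX {l l' : ℤ} {r s : ℕ} (hl : l % 2 = 1) (hll' : (l' - l) % 4 = 2) (hr : r < n)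
    (hs : s < n) : spinX n l r ≠ spinX n l' s := by
  unfold spinX
  split_ifs <;> intro h
  all_goals first
    | omega
    | have : (2 * r : ℤ) = 4 * n - 2 - 2 * s := by exact_mod_cast h
      omega
    | have : (4 * n - 2 - 2 * r : ℤ) = 2 * s := by exact_mod_cast h
      omega

def lowestRight (n : ℕ) (ε : ℝ) (la lb : ℤ) : List (ℝ × ℝ) :=
  spinPath n lb (tent ((lb : ℝ) + 2 * n - 1) ((la : ℝ) + 4 * n - 1) 2 (n - 1))
    ((la : ℝ) + 4 * n - 2 - ε)

/-- `p⁻_{i,k}` for `i < N` is `lowestPair n ε (k - (2N - 2i - 1)) (k + (2N - 2i - 1))`; the relation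
`lb + 4i = la + 4N - 2` between the two labels puts the peak of the second half at index `i`. -/
def lowestPair (n : ℕ) (ε : ℝ) (la lb : ℤ) : List (ℝ × ℝ) :=
  lowestSpin n ε la ++ (lowestRight n ε la lb).reverse

lemma tent_crossB (hi : i < n) (hlab : lb + 4 * i = la + 4 * n - 2) :
    (lb : ℝ) + 2 * n - 1 + i * 2 = (la : ℝ) + 4 * n - 1 + (((n - 1 : ℕ) : ℝ) - i) * 2 := by
  have : ((lb + 4 * i : ℤ) : ℝ) = ((la + 4 * n - 2 : ℤ) : ℝ) := by rw [hlab]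
  push_cast at this
  rw [Nat.cast_sub (by omega)]
  push_cast
  linarith

lemma lowestRight_mem (hi : i < n) (hlab : lb + 4 * i = la + 4 * n - 2) :
    lowestRight n ε la lb ∈ pathsBspin n ε lb := by
  have hc := tent_crossB hi hlab
  refine spinPath_mem (by omega) (by rw [tent_eq_left zero_le_two hc (Nat.zero_le i)]; simp)
    (fun r hr => ?_) (Or.inr ?_)
  · rcases lt_or_ge r i with hri | hir
    · left
      rw [tent_eq_left zero_le_two hc hri, tent_eq_left zero_le_two hc hri.le]; push_cast; ring
    · right
      rw [tent_eq_right zero_le_two hc (by omega), tent_eq_right zero_le_two hc hir]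
      push_cast; ring
  · rw [tent_eq_right zero_le_two hc (by omega)]; ring

lemma not_isValley_lowestRight (hε : 0 < ε) (hi : i < n) (hlab : lb + 4 * i = la + 4 * n - 2)
    {s : ℕ} (hs : 0 < s) (hsn : s < n) :
    ¬ IsValley (fun r => (pt (lowestRight n ε la lb) r).2) s := fun ⟨hprev, hnext⟩ => by
  have hc := tent_crossB hi hlab
  simp only [lowestRight, pt_spinPath_of_lt hsn, pt_spinPath_of_lt (show s - 1 < n by omega)]
    at hprev hnext
  rcases tent_pred_lt_or_succ_lt two_pos hc hs with h | h
  · linarith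
  rcases lt_or_eq_of_le (show s + 1 ≤ n by omega) with hs' | hs'
  · rw [pt_spinPath_of_lt hs'] at hnext
    linarith
  · rw [hs', pt_spinPath_self, tent_eq_right zero_le_two hc (by omega),
      show s = n - 1 by omega] at hnext
    linarith

lemma lowestPair_cornersB (hε : 0 < ε) (hε' : ε < 1 / 2) (hi : i < n)
    (hlab : lb + 4 * i = la + 4 * n - 2) : Cp (.B n ε) (lowestPair n ε la lb) true = ∅ := by
  have hA := lowestSpin_mem (ε := ε) (l := la) (Nat.zero_lt_of_lt hi)
  have hB := lowestRight_mem (ε := ε) hi hlab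
  refine Set.eq_empty_iff_forall_notMem.mpr fun jl hjl => ?_
  rcases isValley_or_of_mem_cornersB hjl with ⟨u, hu, hu', hx, hv⟩ | ⟨l', hin, hout⟩
  · rw [lowestPair, List.length_append, List.length_reverse, hA.1, hB.1] at hu'
    rcases lt_or_ge u n with hun | hnu
    · exact not_isValley_lowestSpin hu hun ((isValley_append_iff (by rw [hA.1]; omega)).mp hv)
    rcases lt_or_ge u (n + 2) with hun | hnu'
    · refine hx ?_
      rcases lt_or_eq_of_le (show u ≤ n + 1 by omega) with hu₁ | rfl
      · rw [show u = n by omega, lowestPair, pt_append_of_lt (by rw [hA.1]; omega)]; exact hA.2.2.1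
      · rw [lowestPair, show n + 1 = 2 * n + 1 - n by omega, pt_append_reverse hA.1 hB.1 le_rfl]
        exact hB.2.2.1
    · rw [show u = 2 * n + 1 - (2 * n + 1 - u) by omega] at hv
      exact not_isValley_lowestRight hε hi hlab (show 0 < 2 * n + 1 - u by omega) (by omega)
        ((isValley_append_reverse_iff hA.1 hB.1 (by omega) (by omega)).mp hv)
  · rcases List.mem_append.mp hin with h | h
    · have := congrArg Prod.snd (eq_pt_of_mem_pathsBspin hA h rfl)
      rw [lowestSpin, pt_spinPath_self] at this
      exact intCast_ne_of_pos_of_lt_one (z := l' - (la + 4 * n - 2)) (x := 2 * ε) (by linarith)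
        (by linarith) (by push_cast; simp only at this; linarith)
    · have := congrArg Prod.snd (eq_pt_of_mem_pathsBspin hB (List.mem_reverse.mp h) rfl)
      rw [lowestRight, pt_spinPath_self] at this
      refine hout (List.mem_append_left _ ?_)
      convert pt_mem (show n < (lowestSpin n ε la).length by rw [hA.1]; omega) using 1
      rw [lowestSpin, pt_spinPath_self]
      simp only at this
      exact Prod.ext rfl (by linarith)

lemma eq_lowestRight (hb : b ∈ pathsBspin n ε lb) (hpred : (pt b (n - 1)).2 = la + 4 * n - 1)
    (hlast : (pt b n).2 = (pt b (n - 1)).2 - (1 + ε))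
    (htent : ∀ r ≤ n - 1, (pt b r).2 = tent (pt b 0).2 (pt b (n - 1)).2 2 (n - 1) r) :
    b = lowestRight n ε la lb :=
  eq_spinPath hb (fun r hr => by rw [htent r (by omega), hb.2.2.2.1, hpred])
    (by rw [hlast, hpred]; ring)

lemma not_isValley_left_of_cornersB_eq_empty (hC : Cp (.B n ε) (a ++ b.reverse) true = ∅)
    (ha : a ∈ pathsBspin n ε la) (hla : la % 2 = 1) (hb : b.length = n + 1) :
    ∀ s, 0 < s → s < n → ¬ IsValley (fun r => (pt a r).2) s := fun s hs hsn hv =>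
  not_isValley_of_cornersB_eq_empty hC ha hla hs hsn hs (by simp [ha.1, hb]; omega)
    (pt_append_of_lt (by rw [ha.1]; omega)) ((isValley_append_iff (by rw [ha.1]; omega)).mpr hv)

lemma not_isValley_right_of_cornersB_eq_empty (hC : Cp (.B n ε) (a ++ b.reverse) true = ∅)
    (ha : a.length = n + 1) (hb : b ∈ pathsBspin n ε lb) (hlb : lb % 2 = 1) :
    ∀ s, 0 < s → s < n → ¬ IsValley (fun r => (pt b r).2) s := fun s hs hsn hv =>
  not_isValley_of_cornersB_eq_empty hC hb hlb hs hsn (u := 2 * n + 1 - s) (by omega)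
    (by simp [ha, hb.1]; omega) (pt_append_reverse ha hb.1 hsn.le)
    ((isValley_append_reverse_iff ha hb.1 hs hsn).mpr hv)

lemma eq_lowestPair_of_cornersB_eq_empty (hε : 0 < ε) (hi : i < n)
    (hla : la % 2 = 1) (hlab : lb + 4 * i = la + 4 * n - 2) (ha : a ∈ pathsBspin n ε la)
    (hb : b ∈ pathsBspin n ε lb) (hab : (pt b n).2 < (pt a n).2)
    (hC : Cp (.B n ε) (a ++ b.reverse) true = ∅) : a ++ b.reverse = lowestPair n ε la lb := by
  have hn : 0 < n := Nat.zero_lt_of_lt hi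
  have hlb : lb % 2 = 1 := by omega
  have haQ : pt a n ∈ a ++ b.reverse := List.mem_append_left _ (pt_mem (by rw [ha.1]; omega))
  have hbQ : pt b n ∈ a ++ b.reverse :=
    List.mem_append_right _ (List.mem_reverse.mpr (pt_mem (by rw [hb.1]; omega)))
  have hends : ∀ v ∈ a ++ b.reverse, v.1 = 2 * n - 1 → v = pt a n ∨ v = pt b n := fun v hv hx =>
    (List.mem_append.mp hv).imp (eq_pt_of_mem_pathsBspin ha · hx)
      fun h => eq_pt_of_mem_pathsBspin hb (List.mem_reverse.mp h) hx
  have hva := not_isValley_left_of_cornersB_eq_empty hC ha hla hb.1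
  have hvb := not_isValley_right_of_cornersB_eq_empty hC ha.1 hb hlb
  -- a descending last step of `a` would leave its end a spin corner, `b` ending lower
  have ha_eq : a = lowestSpin n ε la := by
    refine eq_lowestSpin_of_not_isValley ha hn hε hva ?_
    rcases ha.2.2.2.2.2 with h | h
    · linarith
    · exfalso
      rcases hends _ (mem_of_cornersB_eq_empty hC ha hn hla haQ (by linarith)) rfl with e | e <;>
      · have := congrArg Prod.snd e
        simp only at this
        linarith
  have ha_top : (pt a n).2 = la + 4 * n - 2 + ε := by rw [ha_eq, lowestSpin, pt_spinPath_self]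
  -- rising all the way, `b` would end higher than `a`
  have hb_last : (pt b n).2 = (pt b (n - 1)).2 - (1 + ε) := by
    rcases hb.2.2.2.2.2 with h | h
    · have hb_eq := eq_lowestSpin_of_not_isValley hb hn hε hvb (by linarith)
      rw [hb_eq, lowestSpin, pt_spinPath_self] at hab
      have : (la : ℝ) < lb := by exact_mod_cast (show la < lb by omega)
      linarith
    · linarith
  have hb_pred : (pt b (n - 1)).2 = la + 4 * n - 1 := by
    rcases hends _ (mem_of_cornersB_eq_empty hC hb hn hlb hbQ hb_last) rfl with e | e <;>
      have := congrArg Prod.snd e <;> simp only at this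
    · linarith
    · linarith
  rw [ha_eq, eq_lowestRight hb hb_pred hb_last fun r hr => eq_tent_of_not_isValley
    (y := fun r => (pt b r).2) two_pos (abs_steps_of_mem_pathsBspin hb)
    (fun s hs hsn => hvb s hs (by omega)) hr, lowestPair]

lemma height_eq_of_peak_mem (hi : i < n) (hla : la % 2 = 1) (hlab : lb + 4 * i = la + 4 * n - 2)
    (ha : a ∈ pathsBspin n ε la) (hb : b ∈ pathsBspin n ε lb)
    (hmem : (spinX n lb i, (lb : ℝ) + 2 * n - 1 + 2 * i) ∈ a ++ b.reverse) :
    (pt b i).2 = lb + 2 * n - 1 + 2 * i := by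
  rcases List.mem_append.mp hmem with h | h
  · obtain ⟨r, hr, e⟩ := mem_iff_exists_pt.mp h
    have hx := congrArg Prod.fst e
    rcases lt_or_eq_of_le (show r ≤ n by rw [ha.1] at hr; omega) with hr | rfl
    · rw [fst_pt_of_mem_pathsBspin ha hr] at hx
      exact absurd hx (spinX_ne_spinX hla (by omega) hr hi)
    · rw [ha.2.2.1] at hx
      exact absurd hx.symm spinX_ne
  · obtain ⟨r, hr, e⟩ := mem_iff_exists_pt.mp (List.mem_reverse.mp h)
    have hx := congrArg Prod.fst e
    rcases lt_or_eq_of_le (show r ≤ n by rw [hb.1] at hr; omega) with hr | rfl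
    · rw [fst_pt_of_mem_pathsBspin hb hr] at hx
      obtain rfl := eq_of_spinX_eq hx
      rw [e]
    · rw [hb.2.2.1] at hx
      exact absurd hx.symm spinX_ne

lemma eq_lowestPair_of_peak_mem (hε : 0 < ε) (hε' : ε < 1 / 2) (hi : i < n)
    (hla : la % 2 = 1) (hlab : lb + 4 * i = la + 4 * n - 2) (ha : a ∈ pathsBspin n ε la)
    (hb : b ∈ pathsBspin n ε lb) (hab : (pt b n).2 < (pt a n).2)
    (hmem : (spinX n lb i, (lb : ℝ) + 2 * n - 1 + 2 * i) ∈ a ++ b.reverse) :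
    a ++ b.reverse = lowestPair n ε la lb := by
  have hn : 0 < n := Nat.zero_lt_of_lt hi
  have hlab' : (lb : ℝ) + 4 * i = la + 4 * n - 2 := by exact_mod_cast hlab
  have hbi := height_eq_of_peak_mem hi hla hlab ha hb hmem
  have hsteps := abs_steps_of_mem_pathsBspin hb
  have hb_pred_ge : la + 4 * n - 1 ≤ (pt b (n - 1)).2 := by
    have := abs_sub_le_of_forall_abs_succ_sub_le (y := fun r => (pt b r).2)
      (show i ≤ n - 1 by omega) fun s _ hs => (hsteps s hs).le
    rw [abs_le, Nat.cast_sub (show 1 ≤ n by omega), hbi] at this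
    push_cast at this
    linarith [this.1]
  have ha_pred_le := height_pred_le_of_mem_pathsBspin ha hn
  obtain ⟨za, hza⟩ := exists_height_eq_of_mem_pathsBspin ha (show n - 1 < n by omega)
  obtain ⟨zb, hzb⟩ := exists_height_eq_of_mem_pathsBspin hb (show n - 1 < n by omega)
  -- only a rising last step of `a` and a descending one of `b` let `b` end lower than `a`
  rcases ha.2.2.2.2.2 with ha_last | ha_last
  swap
  · rcases hb.2.2.2.2.2 with h | h <;> linarith
  rcases hb.2.2.2.2.2 with hb_last | hb_last
  · linarith
  -- the gap between `b` and `a` at index `n - 1` is an integer in `[2, 2 + 2ε)`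
  have hgap : (pt b (n - 1)).2 - (pt a (n - 1)).2 = 2 := by
    have hD : (pt b (n - 1)).2 - (pt a (n - 1)).2 = ((lb - la + 4 * (zb - za) : ℤ) : ℝ) := by
      rw [hza, hzb]; push_cast; ring
    have h₁ : ((2 : ℤ) : ℝ) ≤ ((lb - la + 4 * (zb - za) : ℤ) : ℝ) := by
      rw [← hD]; push_cast; linarith
    have h₂ : ((lb - la + 4 * (zb - za) : ℤ) : ℝ) < ((3 : ℤ) : ℝ) := by
      rw [← hD]; push_cast; linarith
    have := Int.cast_le.mp h₁
    have := Int.cast_lt.mp h₂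
    rw [hD, show lb - la + 4 * (zb - za) = 2 by omega]
    norm_num
  have hb_pred : (pt b (n - 1)).2 = la + 4 * n - 1 := by linarith
  rw [eq_lowestSpin ha hn (by linarith) (by linarith), eq_lowestRight hb hb_pred (by linarith)
    fun r hr => eq_tent_of_peak (y := fun r => (pt b r).2) (fun s hs => (hsteps s hs).le)
      (show i ≤ n - 1 by omega) hr (by rw [hbi, hb.2.2.2.1]; ring)
      (by rw [hbi, hb_pred, Nat.cast_sub (show 1 ≤ n by omega)]; push_cast; linarith),
    lowestPair]

lemma peak_mem_lowestPair (hi : i < n) (hlab : lb + 4 * i = la + 4 * n - 2) :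
    (spinX n lb i, (lb : ℝ) + 2 * n - 1 + 2 * i) ∈ lowestPair n ε la lb := by
  refine List.mem_append_right _ (List.mem_reverse.mpr ?_)
  convert pt_mem (show i < (lowestRight n ε la lb).length by
    rw [lowestRight, length_spinPath]; omega) using 1
  rw [lowestRight, pt_spinPath_of_lt hi, tent_eq_left zero_le_two (tent_crossB hi hlab) le_rfl]
  exact Prod.ext rfl (by ring)

end PairedSpinPaths

lemma existsUnique_and_iff_of_iff_eq {α : Type*} {P : Set α} {C L : α → Prop} {q : α}
    (hq : q ∈ P) (hC : ∀ p ∈ P, C p ↔ p = q) (hL : ∀ p ∈ P, L p ↔ p = q) :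
    (∃! p, p ∈ P ∧ C p) ∧ ∀ p ∈ P, (C p ↔ L p) :=
  ⟨⟨q, ⟨hq, (hC q hq).mpr rfl⟩, fun p ⟨hp, hCp⟩ => (hC p hp).mp hCp⟩,
    fun p hp => (hC p hp).trans (hL p hp).symm⟩

section TypeBPairs

variable {n i : ℕ} {ε : ℝ} {k : ℤ} {p : List (ℝ × ℝ)}

lemma lowestPair_mem (hε : 0 < ε) (hi : i < n) :
    lowestPair n ε (k - (2 * (n : ℤ) - 2 * (i : ℤ) - 1)) (k + (2 * (n : ℤ) - 2 * (i : ℤ) - 1)) ∈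
      pathsB n ε i k := by
  rw [pathsB, if_neg hi.ne]
  refine ⟨_, _, lowestSpin_mem (Nat.zero_lt_of_lt hi), lowestRight_mem hi (by ring), rfl, ?_, ?_⟩
    <;> rw [lowestSpin, lowestRight, pt_spinPath_self, pt_spinPath_self]
  linarith

theorem cornersB_eq_empty_iff_eq_lowestPair (hε : 0 < ε) (hε' : ε < 1 / 2)
    (hi : i < n) (hk : k % 2 = 0) (hp : p ∈ pathsB n ε i k) :
    Cp (.B n ε) p true = ∅ ↔ p = lowestPair n ε (k - (2 * (n : ℤ) - 2 * (i : ℤ) - 1))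
      (k + (2 * (n : ℤ) - 2 * (i : ℤ) - 1)) := by
  rw [pathsB, if_neg hi.ne] at hp
  obtain ⟨a, b, ha, hb, rfl, -, hab⟩ := hp
  refine ⟨eq_lowestPair_of_cornersB_eq_empty hε hi (by omega) (by ring) ha hb (by linarith),
    fun h => ?_⟩
  rw [h]
  exact lowestPair_cornersB hε hε' hi (by ring)

theorem lowPointB_mem_iff_eq_lowestPair (hε : 0 < ε) (hε' : ε < 1 / 2)
    (hi : i < n) (hk : k % 2 = 0) (hp : p ∈ pathsB n ε i k) :
    lowPoint (.B n ε) i k ∈ p ↔ p = lowestPair n ε (k - (2 * (n : ℤ) - 2 * (i : ℤ) - 1))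
      (k + (2 * (n : ℤ) - 2 * (i : ℤ) - 1)) := by
  have hlow : lowPoint (.B n ε) i k = (spinX n (k + (2 * (n : ℤ) - 2 * (i : ℤ) - 1)) i,
      ((k + (2 * (n : ℤ) - 2 * (i : ℤ) - 1) : ℤ) : ℝ) + 2 * n - 1 + 2 * i) := by
    simp only [lowPoint, if_neg hi.ne]
    refine Prod.ext (cast_iotaB_fst hi.ne (by omega) (by omega)) ?_
    rw [iotaB_snd]; push_cast; ring
  rw [hlow]
  rw [pathsB, if_neg hi.ne] at hp
  obtain ⟨a, b, ha, hb, rfl, -, hab⟩ := hp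
  refine ⟨eq_lowestPair_of_peak_mem hε hε' hi (by omega) (by ring) ha hb (by linarith),
    fun h => ?_⟩
  rw [h]
  exact peak_mem_lowestPair hi (by ring)

end TypeBPairs

/-- For each `(i,k) ∈ X` there exists exactly one path in `𝒫_{i,k}` with no
upper corners (the lowest path `p⁻_{i,k}`); moreover a path of `𝒫_{i,k}` has no upper
corners iff it contains the distinguished point (`(N+1-i, k+N+1)` in type A;
`ι(i, k+4N-2)` in type B when `i < N`; `(2N-1, k+4N-2+ε)` in type B when `i = N`) — hence
`p⁻_{i,k}` is also the unique path containing that point. -/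
theorem stmt1 (S : Setting) (hS : S.valid) (i : ℕ) (k : ℤ) (hik : (i, k) ∈ X S) :
    (∃! p, p ∈ P S i k ∧ Cp S p true = ∅) ∧
    (∀ p ∈ P S i k, (Cp S p true = ∅ ↔ lowPoint S i k ∈ p)) := by
  cases S with
  | A n =>
    obtain ⟨-, hin, -⟩ := hik
    exact existsUnique_and_iff_of_iff_eq (lowestA_mem hin)
      (fun p hp => cornersA_eq_empty_iff_eq_lowestA hin hp)
      (fun p hp => lowPointA_mem_iff_eq_lowestA hin hp)
  | B n ε =>
    obtain ⟨hn, hε, hε'⟩ := hS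
    rcases hik with ⟨rfl, hk⟩ | ⟨-, hi, hk⟩
    · have hP : P (.B i ε) i k = pathsBspin i ε k := by simp [P, pathsB]
      have hlow : lowPoint (.B i ε) i k = (2 * (i : ℝ) - 1, (k : ℝ) + 4 * i - 2 + ε) := by
        simp [lowPoint]
      rw [hP, hlow]
      exact existsUnique_and_iff_of_iff_eq (lowestSpin_mem (by omega))
        (fun p hp => cornersB_eq_empty_iff_eq_lowestSpin (by omega) hε hε' hk hp)
        (fun p hp => top_mem_iff_eq_lowestSpin (by omega) hε hp)
    · exact existsUnique_and_iff_of_iff_eq (lowestPair_mem hε hi)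
        (fun p hp => cornersB_eq_empty_iff_eq_lowestPair hε hε' hi hk hp)
        (fun p hp => lowPointB_mem_iff_eq_lowestPair hε hε' hi hk hp)

end Paper
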